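/- arXiv:2311.06421 — 5 statements merged into one kernel-verified Lean document; each statement's English description precedes it below -/
import Mathlib

section
/- If x ∈ ℝ^{2n} has all coordinates x_i ≥ 3, then the image (y_1,...,y_{2n}) under the linear map L satisfies y_{i+1} ≥ 2 y_i and y_1 ≥ 6n ≥ 12 for n ≥ 2; in particular y_{i+1} ≥ 2 y_i ≥ 12 for all i. -/
/-!
Row `i` of `L` (0-based) equals `2 ^ i * ∑ x` plus the tail `∑_{j ≥ 2n - i} 2 ^ (j - (2n - i)) * x j`,
so consecutive rows satisfy `y (i + 1) = 2 * y i + x (2n - 1 - i)`. For nonnegative coordinates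
this gives `2 * y i ≤ y (i + 1)`, and every row dominates `y 0 = ∑ x ≥ 3 * 2n`.
-/

open Finset

/-- The linear map of the paper (0-based indices), see `stmt2`. -/
noncomputable def Lmap (n : ℕ) (x : Fin (2*n) → ℝ) : Fin (2*n) → ℝ := fun i =>
  if (i : ℕ) = 0 then ∑ j, x j
  else (∑ j : Fin (2*n), if 2*n - (i:ℕ) ≤ (j:ℕ) then
        ((2:ℝ)^(i:ℕ) + 2^((i:ℕ)-1-(2*n-1-(j:ℕ)))) * x j else 0)
    + 2^(i:ℕ) * ∑ j : Fin (2*n), if (j:ℕ) < 2*n - (i:ℕ) then x j else 0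

section

variable {n : ℕ} (x : Fin (2*n) → ℝ)

noncomputable def Lmap.tail (i : ℕ) : ℝ :=
  ∑ j : Fin (2*n), if 2*n - i ≤ (j:ℕ) then 2 ^ ((j:ℕ) - (2*n - i)) * x j else 0

theorem Lmap_eq (i : ℕ) (hi : i < 2*n) :
    Lmap n x ⟨i, hi⟩ = 2 ^ i * ∑ j, x j + Lmap.tail x i := by
  unfold Lmap Lmap.tail
  split_ifs with h0
  · obtain rfl : i = 0 := h0
    simp only [pow_zero, one_mul, left_eq_add]
    exact sum_eq_zero fun j _ => if_neg (by omega)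
  · rw [mul_sum, mul_sum, ← sum_add_distrib, ← sum_add_distrib]
    refine sum_congr rfl fun j _ => ?_
    split_ifs <;> first | omega | skip
    · rw [show (i - 1 - (2*n - 1 - (j:ℕ))) = (j:ℕ) - (2*n - i) by omega]; ring
    · ring

theorem Lmap.tail_succ (k : ℕ) (hk : k < 2*n) :
    Lmap.tail x (k+1) = 2 * Lmap.tail x k + x ⟨2*n-1-k, by omega⟩ := by
  unfold Lmap.tail
  rw [mul_sum, ← Fintype.sum_ite_eq' (⟨2*n-1-k, by omega⟩ : Fin (2*n)) x, ← sum_add_distrib]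
  refine sum_congr rfl fun j _ => ?_
  simp only [Fin.ext_iff]
  split_ifs <;> first | omega | skip
  · rw [show (j:ℕ) - (2*n - (k+1)) = (j:ℕ) - (2*n - k) + 1 by omega]; ring
  · rw [show (j:ℕ) - (2*n - (k+1)) = 0 by omega]; ring
  · ring

theorem Lmap_succ (k : ℕ) (hk : k + 1 < 2*n) :
    Lmap n x ⟨k+1, hk⟩ = 2 * Lmap n x ⟨k, Nat.lt_of_succ_lt hk⟩ + x ⟨2*n-1-k, by omega⟩ := by
  rw [Lmap_eq, Lmap_eq, Lmap.tail_succ x k (by omega), pow_succ]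
  ring

theorem Lmap.tail_nonneg (hx : ∀ j, 0 ≤ x j) (i : ℕ) : 0 ≤ Lmap.tail x i :=
  sum_nonneg fun j _ => by split_ifs; exacts [mul_nonneg (by positivity) (hx j), le_rfl]

theorem sum_le_Lmap (hx : ∀ j, 0 ≤ x j) (i : ℕ) (hi : i < 2*n) :
    ∑ j, x j ≤ Lmap n x ⟨i, hi⟩ := by
  have hsum : 0 ≤ ∑ j, x j := sum_nonneg fun j _ => hx j
  rw [Lmap_eq]
  nlinarith [one_le_pow₀ (M₀ := ℝ) (a := 2) (n := i) one_le_two, Lmap.tail_nonneg x hx i]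

theorem two_mul_Lmap_le_Lmap_succ (hx : ∀ j, 0 ≤ x j) (k : ℕ) (hk : k + 1 < 2*n) :
    2 * Lmap n x ⟨k, Nat.lt_of_succ_lt hk⟩ ≤ Lmap n x ⟨k+1, hk⟩ := by
  rw [Lmap_succ]
  linarith [hx ⟨2*n-1-k, by omega⟩]

end

/-- If all coordinates of `x ∈ ℝ^{2n}` satisfy `x_i ≥ 3` and `n ≥ 2`, then the image
`y = L x` satisfies `y_{i+1} ≥ 2 y_i` and `y₁ ≥ 6n ≥ 12`; in particular
`y_{i+1} ≥ 2 y_i ≥ 12` for all `i`. -/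
theorem stmt3 (n : ℕ) (hn : 2 ≤ n) (x : Fin (2*n) → ℝ) (hx : ∀ i, 3 ≤ x i) :
    (∀ k : ℕ, (hk : k + 1 < 2*n) →
      2 * Lmap n x ⟨k, by omega⟩ ≤ Lmap n x ⟨k+1, by omega⟩ ∧
      (12:ℝ) ≤ 2 * Lmap n x ⟨k, by omega⟩) ∧
    (6*n : ℝ) ≤ Lmap n x ⟨0, by omega⟩ ∧ (12:ℝ) ≤ (6*n:ℝ) := by
  have hx₀ : ∀ i, 0 ≤ x i := fun i => by linarith [hx i]
  have hsum : (6*n : ℝ) ≤ ∑ j, x j := by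
    have := card_nsmul_le_sum univ x 3 fun i _ => hx i
    rw [card_univ, Fintype.card_fin, nsmul_eq_mul] at this
    push_cast at this
    linarith
  have h12 : (12:ℝ) ≤ 6*n := by
    have : (2:ℝ) ≤ n := by exact_mod_cast hn
    linarith
  refine ⟨fun k hk => ⟨two_mul_Lmap_le_Lmap_succ x hx₀ k hk, ?_⟩,
    hsum.trans (sum_le_Lmap x hx₀ 0 _), h12⟩
  linarith [sum_le_Lmap x hx₀ k (by omega)]
end

section
/- For a > 0 and every k ≥ 1, the k-th ECH capacity of the ball satisfies a·(√(2k) − 2) ≤ c_k(B(a)) ≤ a·√(2k); consequently lim_{k→∞} c_k(B(a))²/k = 2a² = 4·vol(B(a)). -/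
open Filter Real

lemma even_tri (n : ℕ) : n * (n+1) % 2 = 0 := by
  rcases Nat.even_mul_succ_self n with ⟨r, hr⟩; omega

lemma exists_tri (k : ℕ) : ∃ d : ℕ, d*(d+1)/2 ≤ k ∧ k < (d+1)*(d+2)/2 := by
  induction k with
  | zero => exact ⟨0, by norm_num⟩
  | succ n ih =>
    obtain ⟨d, h1, h2⟩ := ih
    by_cases h : n + 1 < (d+1)*(d+2)/2
    · exact ⟨d, le_trans h1 (Nat.le_succ n), h⟩
    · have e1 : (d+1)*(d+1+1) = (d+1)*(d+2) := by ring
      have e2 : (d+1+1)*(d+1+2) = (d+2)*(d+3) := by ring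
      have hlt : (d+1)*(d+2) < (d+2)*(d+3) := by nlinarith
      have he1 : (d+1)*(d+2) % 2 = 0 := by have := even_tri (d+1); omega
      have he2 : (d+2)*(d+3) % 2 = 0 := by
        have := even_tri (d+2)
        have e3 : (d+2)*(d+2+1) = (d+2)*(d+3) := by ring
        omega
      exact ⟨d+1, by omega, by omega⟩

lemma sqrtN_atTop : Tendsto (fun k : ℕ => Real.sqrt k) atTop atTop := by
  rw [tendsto_atTop_atTop]
  intro b
  refine ⟨Nat.ceil (b^2), fun n hn => ?_⟩
  have h1 : b^2 ≤ (n : ℝ) := le_trans (Nat.le_ceil _) (by exact_mod_cast hn)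
  calc b ≤ |b| := le_abs_self b
    _ = Real.sqrt (b^2) := (Real.sqrt_sq_eq_abs b).symm
    _ ≤ Real.sqrt n := Real.sqrt_le_sqrt h1

/-- For `a > 0` and `k ≥ 1`, the `k`-th ECH capacity of the ball `B(a)` (given by
`c_k(B(a)) = a·d` with `d(d+1)/2 ≤ k < (d+1)(d+2)/2`) satisfies
`a(√(2k) - 2) ≤ c_k(B(a)) ≤ a√(2k)`; consequently
`lim_{k→∞} c_k(B(a))²/k = 2a² = 4·vol(B(a))` (where `vol(B(a)) = a²/2`). -/
theorem stmt7 (a : ℝ) (ha : 0 < a) (c : ℕ → ℝ)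
    (hc : ∀ k d : ℕ, d*(d+1)/2 ≤ k → k < (d+1)*(d+2)/2 → c k = a * d) :
    (∀ k : ℕ, 1 ≤ k → a * (Real.sqrt (2*k) - 2) ≤ c k ∧ c k ≤ a * Real.sqrt (2*k)) ∧
    Filter.Tendsto (fun k : ℕ => (c k)^2 / k) Filter.atTop (nhds (4 * (a^2/2))) := by
  choose d hd1 hd2 using exists_tri
  have hck : ∀ k, c k = a * d k := fun k => hc k (d k) (hd1 k) (hd2 k)
  -- key real inequalities, valid for all k
  have key : ∀ k : ℕ, a * (Real.sqrt (2*k) - 2) ≤ c k ∧ c k ≤ a * Real.sqrt (2*k) := by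
    intro k
    have h1 := hd1 k
    have h2 := hd2 k
    have he1 : d k * (d k + 1) % 2 = 0 := even_tri (d k)
    have he2 : (d k + 1) * (d k + 2) % 2 = 0 := by
      have := even_tri (d k + 1)
      have e1 : (d k + 1)*(d k + 1 + 1) = (d k + 1)*(d k + 2) := by ring
      omega
    have hub : d k * d k ≤ 2 * k := by
      have : d k * d k ≤ d k * (d k + 1) := Nat.mul_le_mul_left _ (Nat.le_succ _)
      omega
    have hlb : 2 * k < (d k + 2) * (d k + 2) := by
      have : (d k + 1) * (d k + 2) ≤ (d k + 2) * (d k + 2) := by nlinarith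
      omega
    -- cast to ℝ
    have hubR : ((d k : ℝ))^2 ≤ 2 * (k : ℝ) := by
      have h : ((d k : ℝ)) * d k ≤ 2 * k := by exact_mod_cast hub
      nlinarith [h]
    have hlbR : 2 * (k : ℝ) ≤ ((d k : ℝ) + 2)^2 := by
      have h : 2 * (k:ℝ) ≤ ((d k : ℝ) + 2) * ((d k : ℝ) + 2) := by exact_mod_cast hlb.le
      nlinarith [h]
    have hd_le : (d k : ℝ) ≤ Real.sqrt (2*k) := by
      calc (d k : ℝ) = Real.sqrt ((d k : ℝ)^2) := (Real.sqrt_sq (Nat.cast_nonneg _)).symm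
        _ ≤ Real.sqrt (2*k) := Real.sqrt_le_sqrt hubR
    have hs_le : Real.sqrt (2*k) ≤ (d k : ℝ) + 2 := by
      calc Real.sqrt (2*(k:ℝ)) ≤ Real.sqrt (((d k : ℝ) + 2)^2) := Real.sqrt_le_sqrt hlbR
        _ = (d k : ℝ) + 2 := Real.sqrt_sq (by positivity)
    rw [hck k]
    constructor
    · have : Real.sqrt (2*k) - 2 ≤ (d k : ℝ) := by linarith
      exact mul_le_mul_of_nonneg_left this ha.le
    · exact mul_le_mul_of_nonneg_left hd_le ha.le
  refine ⟨fun k _ => key k, ?_⟩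
  -- limit
  have hinv : Tendsto (fun k : ℕ => (Real.sqrt k)⁻¹) atTop (nhds 0) :=
    sqrtN_atTop.inv_tendsto_atTop
  have hlow : Tendsto (fun k : ℕ => a * Real.sqrt 2 - 2*a * (Real.sqrt k)⁻¹) atTop
      (nhds (a * Real.sqrt 2)) := by
    have := (tendsto_const_nhds (x := a * Real.sqrt 2) (f := atTop (α := ℕ))).sub
      (hinv.const_mul (2*a))
    simpa using this
  have hratio : Tendsto (fun k : ℕ => c k / Real.sqrt k) atTop (nhds (a * Real.sqrt 2)) := by
    apply tendsto_of_tendsto_of_tendsto_of_le_of_le' hlow tendsto_const_nhds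
    · filter_upwards [eventually_ge_atTop 1] with k hk
      have hs : (0:ℝ) < Real.sqrt k := Real.sqrt_pos.2 (by exact_mod_cast hk)
      rw [le_div_iff₀ hs]
      have hsplit : Real.sqrt (2*(k:ℝ)) = Real.sqrt 2 * Real.sqrt k :=
        Real.sqrt_mul (by norm_num) _
      have h := (key k).1
      have hexp : (a * Real.sqrt 2 - 2*a * (Real.sqrt k)⁻¹) * Real.sqrt k
          = a * (Real.sqrt 2 * Real.sqrt k - 2) := by
        field_simp
      rw [hexp, ← hsplit]; exact h
    · filter_upwards [eventually_ge_atTop 1] with k hk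
      have hs : (0:ℝ) < Real.sqrt k := Real.sqrt_pos.2 (by exact_mod_cast hk)
      rw [div_le_iff₀ hs]
      have hsplit : Real.sqrt (2*(k:ℝ)) = Real.sqrt 2 * Real.sqrt k :=
        Real.sqrt_mul (by norm_num) _
      have h := (key k).2
      calc c k ≤ a * Real.sqrt (2*k) := h
        _ = a * Real.sqrt 2 * Real.sqrt k := by rw [hsplit]; ring
  have hsq : Tendsto (fun k : ℕ => (c k / Real.sqrt k)^2) atTop
      (nhds ((a * Real.sqrt 2)^2)) := hratio.pow 2
  have hval : (a * Real.sqrt 2)^2 = 4 * (a^2/2) := by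
    have : Real.sqrt 2 ^ 2 = 2 := Real.sq_sqrt (by norm_num)
    nlinarith [this]
  rw [← hval]
  apply hsq.congr'
  filter_upwards [eventually_ge_atTop 1] with k hk
  have hkpos : (0:ℝ) < k := by exact_mod_cast hk
  rw [div_pow, Real.sq_sqrt hkpos.le]
end

section
/- Constrained maximization over an ellipsoid: let a_1,...,a_M > 0, n_1,...,n_M > 0 be reals and k > 0. Then the maximum of Σ_i n_i d_i a_i over real d_i ≥ 0 subject to Σ_i n_i (d_i² + d_i) ≤ 2k is attained at d_i = λ a_i − 1/2, where λ > 0 satisfies λ² Σ n_i a_i² = 2k + (1/4) Σ n_i, provided λ a_i ≥ 1/2 for all i; and the maximum value equals λ Σ n_i a_i² − (1/2) Σ n_i a_i. -/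
open Finset

/-- Constrained maximization over an ellipsoid: the maximum of `Σ n_i d_i a_i` over real
`d_i ≥ 0` subject to `Σ n_i(d_i² + d_i) ≤ 2k` is attained at `d_i = λ a_i − 1/2`, where
`λ > 0` satisfies `λ² Σ n_i a_i² = 2k + (1/4) Σ n_i`, provided `λ a_i ≥ 1/2` for all `i`;
the maximum value is `λ Σ n_i a_i² − (1/2) Σ n_i a_i`. -/
theorem stmt14 (M : ℕ) (hM : 1 ≤ M) (a n : Fin M → ℝ)
    (ha : ∀ i, 0 < a i) (hn : ∀ i, 0 < n i) (k : ℝ) (hk : 0 < k)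
    (lam : ℝ) (hlam : 0 < lam)
    (hlameq : lam^2 * ∑ i, n i * (a i)^2 = 2*k + (1/4) * ∑ i, n i)
    (hhalf : ∀ i, 1/2 ≤ lam * a i) :
    IsGreatest
      {v : ℝ | ∃ d : Fin M → ℝ, (∀ i, 0 ≤ d i) ∧
        (∑ i, n i * ((d i)^2 + d i)) ≤ 2*k ∧ v = ∑ i, n i * d i * a i}
      (lam * ∑ i, n i * (a i)^2 - (1/2) * ∑ i, n i * a i) ∧
    (∑ i, n i * (lam * a i - 1/2) * a i)
      = lam * ∑ i, n i * (a i)^2 - (1/2) * ∑ i, n i * a i := by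

  have hEq : (∑ i, n i * (lam * a i - 1/2) * a i)
      = lam * ∑ i, n i * (a i)^2 - (1/2) * ∑ i, n i * a i := by
    rw [Finset.mul_sum, Finset.mul_sum, ← Finset.sum_sub_distrib]
    exact Finset.sum_congr rfl fun i _ => by ring
  have hC : ∑ i, n i * ((lam * a i - 1/2)^2 + (lam * a i - 1/2)) = 2*k := by
    have h1 : ∑ i, n i * ((lam * a i - 1/2)^2 + (lam * a i - 1/2))
        = lam^2 * (∑ i, n i * (a i)^2) - (1/4) * ∑ i, n i := by
      rw [Finset.mul_sum, Finset.mul_sum, ← Finset.sum_sub_distrib]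
      exact Finset.sum_congr rfl fun i _ => by ring
    linarith
  refine ⟨⟨⟨fun i => lam * a i - 1/2, fun i => by linarith [hhalf i], le_of_eq hC, hEq.symm⟩, ?_⟩, hEq⟩
  rintro v ⟨d, hd0, hdc, rfl⟩
  rw [← hEq]
  have key : ∀ i ∈ Finset.univ (α := Fin M), 2*lam*(n i * d i * a i) ≤
      n i * ((d i)^2 + d i) + (2*lam*(n i * (lam * a i - 1/2) * a i)
        - n i * ((lam * a i - 1/2)^2 + (lam * a i - 1/2))) := by
    intro i _
    nlinarith [sq_nonneg (d i - (lam * a i - 1/2)), (hn i).le]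
  have hsum := Finset.sum_le_sum key
  simp only [Finset.sum_add_distrib, Finset.sum_sub_distrib, ← Finset.mul_sum] at hsum
  nlinarith [hsum, hdc, hC, hlam]
end

section
/- For X₁ = B⁴(1) and X₂ the concave toric domain whose weight decomposition is B(1) ⊔ E(ε,1/ε)'s weights, the inclusion distance satisfies d_I(X₁,X₂) = ln(1 + 1/ε): the smallest T with X₂ ⊂ T·B⁴(1) is T = 1 + 1/ε. -/
open Set

/-- The toric domain `X_Ω ⊂ ℂ²` associated to a region `Ω` in the first quadrant. -/
def toricDomain (Ω : Set (ℝ × ℝ)) : Set (ℂ × ℂ) :=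
  {z | (Real.pi * ‖z.1‖ ^ 2, Real.pi * ‖z.2‖ ^ 2) ∈ Ω}

/-- Moment region of the ball `B⁴(1)`: the open triangle with legs `1`. -/
def ballRegion : Set (ℝ × ℝ) := {p | 0 ≤ p.1 ∧ 0 ≤ p.2 ∧ p.1 + p.2 < 1}

/-- Moment region of the concave toric domain obtained by concatenating the moment
triangle of `B(1)` with that of `E(ε, 1/ε)`: the region under the convex piecewise
linear function `max(1 + 1/ε − u/ε², 1 + ε − u)`. -/
def concatRegion (ε : ℝ) : Set (ℝ × ℝ) :=
  {p | 0 ≤ p.1 ∧ 0 ≤ p.2 ∧ p.2 < max (1 + 1/ε - p.1/ε^2) (1 + ε - p.1)}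

/-- The scaling `T·X = {√T z : z ∈ X}`, which multiplies the moment region by `T`. -/
noncomputable def scaleC (T : ℝ) (X : Set (ℂ × ℂ)) : Set (ℂ × ℂ) :=
  (fun z => Real.sqrt T • z) '' X

/-- The inclusion pseudo-distance `d_I` on domains in `ℂ²` (valued in `ℝ≥0∞`). -/
noncomputable def dIC (U V : Set (ℂ × ℂ)) : ENNReal :=
  sInf {l | ∃ T : ℝ, 1 ≤ T ∧ l = ENNReal.ofReal (Real.log T) ∧
    U ⊆ scaleC T V ∧ V ⊆ scaleC T U}

/-! Both domains are preimages of their moment regions under the moment map, which is onto the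
closed quadrant and turns the scaling `T·X` into `T • Ω`; so every inclusion is an inclusion of
planar regions. `concatRegion ε ⊆ T • ballRegion` holds exactly when `1 + 1/ε ≤ T`: the point
`(0, 1 + 1/ε)` lies on the boundary of the concatenated region, and the region lies below the
line `u + v = 1 + 1/ε`. The reverse inclusion needs no scaling beyond `T ≥ 1`, since the
ball's triangle sits inside the concatenated region. -/

open scoped Pointwise

noncomputable def momentMap (z : ℂ × ℂ) : ℝ × ℝ := (Real.pi * ‖z.1‖ ^ 2, Real.pi * ‖z.2‖ ^ 2)

theorem toricDomain_eq_preimage (Ω : Set (ℝ × ℝ)) : toricDomain Ω = momentMap ⁻¹' Ω := rfl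

theorem momentMap_smul (c : ℝ) (z : ℂ × ℂ) : momentMap (c • z) = c ^ 2 • momentMap z := by
  simp only [momentMap, Prod.smul_fst, Prod.smul_snd, Prod.smul_mk, smul_eq_mul, norm_smul,
    Real.norm_eq_abs, mul_pow, sq_abs]
  ring_nf

theorem Ici_zero_subset_range_momentMap : Ici (0 : ℝ × ℝ) ⊆ range momentMap := by
  rintro ⟨a, b⟩ hp
  have hroot : ∀ x : ℝ, 0 ≤ x → Real.pi * ‖((√(x / Real.pi) : ℝ) : ℂ)‖ ^ 2 = x := fun x hx => by
    rw [Complex.norm_real, Real.norm_eq_abs, sq_abs, Real.sq_sqrt (by positivity)]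
    field_simp
  exact ⟨(√(a / Real.pi), √(b / Real.pi)),
    Prod.ext (hroot a (Prod.le_def.1 hp).1) (hroot b (Prod.le_def.1 hp).2)⟩

theorem toricDomain_subset_toricDomain_iff {Ω Ω' : Set (ℝ × ℝ)} (hΩ : Ω ⊆ Ici 0) :
    toricDomain Ω ⊆ toricDomain Ω' ↔ Ω ⊆ Ω' :=
  preimage_subset_preimage_iff (hΩ.trans Ici_zero_subset_range_momentMap)

theorem scaleC_toricDomain {T : ℝ} (hT : 0 < T) (Ω : Set (ℝ × ℝ)) :
    scaleC T (toricDomain Ω) = toricDomain (T • Ω) := by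
  have hsqrt : √T ≠ 0 := (Real.sqrt_pos.2 hT).ne'
  ext z
  rw [scaleC, image_smul, mem_smul_set_iff_inv_smul_mem₀ hsqrt, toricDomain_eq_preimage,
    toricDomain_eq_preimage, mem_preimage, mem_preimage, momentMap_smul, inv_pow,
    Real.sq_sqrt hT.le, mem_smul_set_iff_inv_smul_mem₀ hT.ne']

theorem mem_smul_ballRegion {T : ℝ} (hT : 0 < T) (p : ℝ × ℝ) :
    p ∈ T • ballRegion ↔ 0 ≤ p.1 ∧ 0 ≤ p.2 ∧ p.1 + p.2 < T := by
  rw [mem_smul_set_iff_inv_smul_mem₀ hT.ne']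
  simp only [ballRegion, mem_ofPred_eq, Prod.smul_fst, Prod.smul_snd, smul_eq_mul, ← mul_add,
    inv_mul_lt_iff₀ hT, mul_one, inv_pos.2 hT, mul_nonneg_iff_of_pos_left]

theorem concatRegion_subset_Ici (ε : ℝ) : concatRegion ε ⊆ Ici 0 :=
  fun _ hp => Prod.le_def.2 ⟨hp.1, hp.2.1⟩

theorem ballRegion_subset_concatRegion {ε : ℝ} (hε : 0 ≤ ε) : ballRegion ⊆ concatRegion ε :=
  fun _ ⟨h1, h2, hlt⟩ => ⟨h1, h2, lt_max_of_lt_right (by linarith)⟩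

theorem ballRegion_subset_smul_ballRegion {T : ℝ} (hT : 1 ≤ T) : ballRegion ⊆ T • ballRegion :=
  fun _ ⟨h1, h2, hlt⟩ => (mem_smul_ballRegion (by linarith) _).2 ⟨h1, h2, by linarith⟩

theorem concatRegion_subset_smul_ballRegion_iff {ε T : ℝ} (hε : 0 < ε) (hε1 : ε ≤ 1)
    (hT : 0 < T) : concatRegion ε ⊆ T • ballRegion ↔ 1 + 1 / ε ≤ T := by
  have hinv : ε ≤ 1 / ε := by rw [le_div_iff₀ hε]; nlinarith
  constructor
  · intro hsub
    by_contra! hlt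
    have hmem : ((0 : ℝ), T) ∈ concatRegion ε :=
      ⟨le_rfl, hT.le, lt_max_of_lt_left (by simpa using hlt)⟩
    exact absurd ((mem_smul_ballRegion hT _).1 (hsub hmem)).2.2 (by simp)
  · rintro hle p ⟨h1, h2, hlt⟩
    refine (mem_smul_ballRegion hT p).2 ⟨h1, h2, ?_⟩
    rcases lt_max_iff.1 hlt with h | h
    · -- the steep edge has slope `-1/ε² ≤ -1`, so `p.1 + p.2` is largest at `p.1 = 0`
      have hsteep : p.1 ≤ p.1 / ε ^ 2 := by
        rw [le_div_iff₀ (by positivity)]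
        nlinarith [mul_le_mul_of_nonneg_left (pow_le_one₀ hε.le hε1 : ε ^ 2 ≤ 1) h1]
      linarith
    · linarith

theorem dIC_eq_of_isLeast {U V : Set (ℂ × ℂ)} {T₀ : ℝ}
    (h : IsLeast {T | 1 ≤ T ∧ U ⊆ scaleC T V ∧ V ⊆ scaleC T U} T₀) :
    dIC U V = ENNReal.ofReal (Real.log T₀) := by
  refine le_antisymm (sInf_le ⟨T₀, h.1.1, rfl, h.1.2⟩) (le_sInf ?_)
  rintro _ ⟨T, hT, rfl, hUV⟩
  exact ENNReal.ofReal_le_ofReal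
    (Real.log_le_log (by linarith [h.1.1]) (h.2 ⟨hT, hUV⟩))

/-- For `X₁ = B⁴(1)` and `X₂` the concave toric domain concatenating `B(1)` and
`E(ε,1/ε)`, one has `d_I(X₁,X₂) = ln(1 + 1/ε)`; the smallest `T` with `X₂ ⊆ T·X₁` is
`T = 1 + 1/ε`. -/
theorem stmt16 (ε : ℝ) (h0 : 0 < ε) (h1 : ε < 1) :
    dIC (toricDomain ballRegion) (toricDomain (concatRegion ε))
        = ENNReal.ofReal (Real.log (1 + 1/ε)) ∧
    ∀ T : ℝ, 0 < T →
      (toricDomain (concatRegion ε) ⊆ scaleC T (toricDomain ballRegion) ↔ 1 + 1/ε ≤ T) := by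
  have hconcat : ∀ T : ℝ, 0 < T →
      (toricDomain (concatRegion ε) ⊆ scaleC T (toricDomain ballRegion) ↔ 1 + 1/ε ≤ T) :=
    fun T hT => by
      rw [scaleC_toricDomain hT, toricDomain_subset_toricDomain_iff (concatRegion_subset_Ici ε)]
      exact concatRegion_subset_smul_ballRegion_iff h0 h1.le hT
  have hT₀ : 1 ≤ 1 + 1 / ε := by have := one_div_pos.2 h0; linarith
  have hball : toricDomain ballRegion ⊆ scaleC (1 + 1 / ε) (toricDomain (concatRegion ε)) := by
    rw [scaleC_toricDomain (by linarith)]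
    exact preimage_mono ((ballRegion_subset_smul_ballRegion hT₀).trans
      (smul_set_mono (ballRegion_subset_concatRegion h0.le)))
  refine ⟨dIC_eq_of_isLeast ⟨⟨hT₀, hball, (hconcat _ (by linarith)).2 le_rfl⟩, ?_⟩, hconcat⟩
  exact fun T ⟨hT, _, hsub⟩ => (hconcat T (by linarith)).1 hsub
end

section
/- Upper-bound half of Lemma cap: let B_1,...,B_N satisfy B_i ≥ 8² and B_{i+1} ≥ B_i² for all i, set a_i = B_i^{−i/2} and n_i = B_i^{1+i}, and define c_k by the weight-maximization formula restricted to indices i ≤ M (all d_{i,j} = 0 for i > M). Then for B_M^{M+1} ≤ k ≤ B_{M+1}^{M+1} (with M < N) one has c_k ≤ C √(k B_M) for a constant C depending only on N. -/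
open Finset Real

/-!
Since `d ≥ 0`, the constraint gives `∑ d_{i,j}² ≤ 2k`, so by Cauchy–Schwarz every admissible
value is at most `√(2k) · √(∑_{i ≤ M} n_i a_i²)`. Here `n_i a_i² = B_i`, and the growth condition
makes `B` increasing, so `∑_{i ≤ M} B_i ≤ M B_M ≤ N B_M`; hence `c_k ≤ √(2N) · √(k B_M)`.
-/

lemma sum_mul_le_sqrt_of_sum_sq_add_self_le {ι : Type*} {s : Finset ι} {d : ι → ℝ} (a : ι → ℝ)
    {K : ℝ} (hd : ∀ x ∈ s, 0 ≤ d x) (hK : ∑ x ∈ s, (d x ^ 2 + d x) ≤ K) :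
    ∑ x ∈ s, d x * a x ≤ √K * √(∑ x ∈ s, a x ^ 2) :=
  calc ∑ x ∈ s, d x * a x ≤ √(∑ x ∈ s, d x ^ 2) * √(∑ x ∈ s, a x ^ 2) :=
        sum_mul_le_sqrt_mul_sqrt s d a
    _ ≤ √K * √(∑ x ∈ s, a x ^ 2) := by
        gcongr
        exact (sum_le_sum fun x hx => le_add_of_nonneg_right (hd x hx)).trans hK

lemma sum_sum_mul_le_sqrt_of_sum_sum_sq_add_self_le {ι κ : Type*} {s : Finset ι}
    {t : ι → Finset κ} {d : ι → κ → ℝ} (a : ι → κ → ℝ) {K : ℝ}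
    (hd : ∀ i ∈ s, ∀ j ∈ t i, 0 ≤ d i j) (hK : ∑ i ∈ s, ∑ j ∈ t i, (d i j ^ 2 + d i j) ≤ K) :
    ∑ i ∈ s, ∑ j ∈ t i, d i j * a i j ≤ √K * √(∑ i ∈ s, ∑ j ∈ t i, a i j ^ 2) := by
  simp only [sum_sigma'] at hK ⊢
  exact sum_mul_le_sqrt_of_sum_sq_add_self_le _
    (fun x hx => hd _ (mem_sigma.1 hx).1 _ (mem_sigma.1 hx).2) hK

lemma monotoneOn_Icc_of_sq_le_succ {B : ℕ → ℝ} {N : ℕ} (hB : ∀ i, 1 ≤ i → i ≤ N → 1 ≤ B i)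
    (hsq : ∀ i, 1 ≤ i → i < N → B i ^ 2 ≤ B (i + 1)) : MonotoneOn B (Set.Icc 1 N) := by
  refine monotoneOn_of_le_succ Set.ordConnected_Icc fun i _ hi hsucc => ?_
  rw [Order.succ_eq_add_one] at hsucc ⊢
  have h1 := hB i hi.1 hi.2
  nlinarith [hsq i hi.1 (by simpa using hsucc.2)]

lemma sum_range_sq_rpow_neg_div_two {b : ℝ} (hb : 0 < b) {i m : ℕ}
    (hm : (m : ℝ) = b ^ (1 + i)) : ∑ _j ∈ range m, (b ^ (-(i : ℝ) / 2)) ^ 2 = b := by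
  rw [sum_const, card_range, nsmul_eq_mul, hm, ← rpow_natCast _ 2, ← rpow_mul hb.le,
    ← rpow_natCast, ← rpow_add hb]
  norm_num

/-- Upper-bound half of Lemma `cap`: with `B_i ≥ 8²`, `B_{i+1} ≥ B_i²`,
`a_i = B_i^{−i/2}`, `n_i = B_i^{1+i}`, and `c_k` defined by the weight-maximization
formula restricted to indices `i ≤ M`, for `B_M^{M+1} ≤ k ≤ B_{M+1}^{M+1}` (`M < N`)
one has `c_k ≤ C √(k B_M)` for a constant `C` depending only on `N`. -/
theorem stmt19 (N : ℕ) (hN : 1 ≤ N) :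
    ∃ C : ℝ, 0 < C ∧
      ∀ (M : ℕ) (B : ℕ → ℝ) (n : ℕ → ℕ) (k : ℕ) (c : ℝ),
        1 ≤ M → M < N →
        (∀ i, 1 ≤ i → i ≤ N → (64:ℝ) ≤ B i) →
        (∀ i, 1 ≤ i → i < N → (B i)^2 ≤ B (i+1)) →
        (∀ i, 1 ≤ i → i ≤ N → (n i : ℝ) = (B i)^(1+i)) →
        ((B M)^(M+1) ≤ (k:ℝ)) → ((k:ℝ) ≤ (B (M+1))^(M+1)) →
        IsGreatest
          {v : ℝ | ∃ d : ℕ → ℕ → ℕ,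
            (∑ i ∈ Finset.Icc 1 M, ∑ j ∈ Finset.range (n i),
              ((d i j : ℝ)^2 + (d i j : ℝ))) ≤ 2*(k:ℝ) ∧
            v = ∑ i ∈ Finset.Icc 1 M, ∑ j ∈ Finset.range (n i),
              (d i j : ℝ) * (B i) ^ (-(i:ℝ)/2)} c →
        c ≤ C * Real.sqrt ((k:ℝ) * B M) := by
  have hN₀ : (0 : ℝ) < N := by exact_mod_cast hN
  refine ⟨√(2 * N), by positivity, ?_⟩
  intro M B n k c hM hMN hB hBsq hn _ _ hc
  obtain ⟨d, hd, rfl⟩ := hc.1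
  have hmono := monotoneOn_Icc_of_sq_le_succ (fun i h1 h2 => by linarith [hB i h1 h2]) hBsq
  have hweights : ∑ i ∈ Icc 1 M, ∑ j ∈ range (n i), (B i ^ (-(i : ℝ) / 2)) ^ 2 ≤ M * B M := by
    have hiN {i} (hi : i ∈ Icc 1 M) : i ≤ N := (mem_Icc.1 hi).2.trans hMN.le
    rw [sum_congr rfl fun i hi => sum_range_sq_rpow_neg_div_two
      (by linarith [hB i (mem_Icc.1 hi).1 (hiN hi)]) (hn i (mem_Icc.1 hi).1 (hiN hi))]
    simpa using sum_le_card_nsmul (Icc 1 M) B (B M) fun i hi =>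
      hmono ⟨(mem_Icc.1 hi).1, hiN hi⟩ ⟨hM, hMN.le⟩ (mem_Icc.1 hi).2
  have hBM : 0 ≤ B M := by linarith [hB M hM hMN.le]
  have hMN : (M : ℝ) ≤ N := by exact_mod_cast hMN.le
  calc _ ≤ √(2 * k) * √(M * B M) :=
        (sum_sum_mul_le_sqrt_of_sum_sum_sq_add_self_le _ (fun _ _ _ _ => Nat.cast_nonneg _) hd).trans
          (by gcongr)
    _ ≤ √(2 * N) * √(k * B M) := by
        rw [← sqrt_mul (by positivity), ← sqrt_mul (by positivity)]
        exact sqrt_le_sqrt (by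
          nlinarith [mul_le_mul_of_nonneg_right hMN (by positivity : (0 : ℝ) ≤ k * B M)])
end
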